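/- Let q be a prime power, let ω ∈ F_{q²} \ F_q, let γ be a generator of the multiplicative group F_{q²}^×, and let G ⊆ PGL₂(F_q) be the stabilizer of ω for the Möbius action on P¹(F_{q²}). Then the set B = { (ωγ^i + ω^q)/(γ^i + 1) : 0 ≤ i < q−1 } is a complete set of unique orbit representatives for the action of G on P¹(F_{q²}) \ {ω, ω^q}: every G-orbit in P¹(F_{q²}) \ {ω, ω^q} contains exactly one element of B. -/

import Mathlib

open Matrix
open scoped LinearAlgebra.Projectivization

/-- The Möbius action of `GL(2,K)` on the projective line `ℙ K (Fin 2 → K)`.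
Since scalar matrices act trivially, this realizes the action of `PGL₂(K)`. -/
noncomputable def mobius {K : Type*} [Field K] (M : GL (Fin 2) K)
    (p : ℙ K (Fin 2 → K)) : ℙ K (Fin 2 → K) :=
  Projectivization.map
    (LinearMap.GeneralLinearGroup.toLinearEquiv
      (Matrix.GeneralLinearGroup.toLin M)).toLinearMap
    (LinearEquiv.injective _) p

/-- The point `[x : 1]` of the projective line. -/
noncomputable def pt {K : Type*} [Field K] (x : K) : ℙ K (Fin 2 → K) :=
  Projectivization.mk K ![x, 1] (by
    intro h
    simpa using congrFun h 1)

/-!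
The linear forms `z ↦ z₀ - ω z₁` and `z ↦ z₀ - ω^q z₁` vanish exactly at `ω` and `ω^q`, so their
ratio identifies `ℙ¹(K) \ {ω, ω^q}` with `Kˣ`. A matrix `(a b; c d)` of `GL₂(F)` fixing `ω` also
fixes `ω^q` (apply Frobenius), and it multiplies the two forms by `μ = a - cω` and by `μ^q`; every
`μ ∈ Kˣ` arises, from the matrix of multiplication by `μ` on `K = F ⊕ Fω`. Hence the stabilizer
acts on `Kˣ` through the subgroup of `(q-1)`-th powers, of index `q - 1` in the cyclic group
`Kˣ = ⟨γ⟩`, and the `i`-th representative has ratio `-γ⁻ⁱ`, so these meet every coset once.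
-/

open Projectivization

section ProjectiveLine

variable {K : Type*} [Field K]

def vanishingForm (a : K) (z : Fin 2 → K) : K := z 0 - a * z 1

def multiplier (A : GL (Fin 2) K) (a : K) : K := A 0 0 - A 1 0 * a

theorem mk_eq_mk_iff_mul_eq_mul {z w : Fin 2 → K} (hz : z ≠ 0) (hw : w ≠ 0) :
    mk K z hz = mk K w hw ↔ z 0 * w 1 = z 1 * w 0 := by
  rw [mk_eq_mk_iff']
  constructor
  · rintro ⟨c, rfl⟩
    simp only [Pi.smul_apply, smul_eq_mul]
    ring
  · intro h
    by_cases hw₀ : w 0 = 0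
    · have hw₁ : w 1 ≠ 0 := fun hw₁ => hw (funext fun i => by fin_cases i <;> assumption)
      refine ⟨z 1 / w 1, funext fun i => ?_⟩
      fin_cases i
      · simp only [hw₀, mul_zero, mul_eq_zero, hw₁, or_false] at h
        simp [hw₀, h]
      · simp [hw₁]
    · refine ⟨z 0 / w 0, funext fun i => ?_⟩
      fin_cases i
      · simp [hw₀]
      · simp only [Fin.mk_one, Fin.isValue, Pi.smul_apply, smul_eq_mul]
        field_simp
        linear_combination h

theorem mk_eq_pt_iff {z : Fin 2 → K} (hz : z ≠ 0) (a : K) :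
    mk K z hz = pt a ↔ vanishingForm a z = 0 := by
  rw [pt, mk_eq_mk_iff_mul_eq_mul, vanishingForm, sub_eq_zero]
  simp [mul_comm]

theorem mk_eq_mk_iff_vanishingForm {a b : K} (hab : a ≠ b) {z w : Fin 2 → K} (hz : z ≠ 0)
    (hw : w ≠ 0) : mk K z hz = mk K w hw ↔
      vanishingForm a z * vanishingForm b w = vanishingForm a w * vanishingForm b z := by
  have key : vanishingForm a z * vanishingForm b w - vanishingForm a w * vanishingForm b z =
      (a - b) * (z 0 * w 1 - z 1 * w 0) := by
    simp only [vanishingForm]; ring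
  rw [mk_eq_mk_iff_mul_eq_mul, ← sub_eq_zero, ← sub_eq_zero (a := vanishingForm a z * _), key,
    mul_eq_zero, or_iff_right (sub_ne_zero.2 hab)]

theorem vanishingForm_mul_add_left (a b t : K) : vanishingForm a ![a * t + b, t + 1] = b - a := by
  simp only [vanishingForm, cons_val_zero, cons_val_one]; ring

theorem vanishingForm_mul_add_right (a b t : K) :
    vanishingForm b ![a * t + b, t + 1] = (a - b) * t := by
  simp only [vanishingForm, cons_val_zero, cons_val_one]; ring

theorem mobius_mk (A : GL (Fin 2) K) {z : Fin 2 → K} (hz : z ≠ 0) :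
    mobius A (mk K z hz) = mk K ((A : Matrix (Fin 2) (Fin 2) K) *ᵥ z)
      (((mulVec_injective_of_isUnit A.isUnit).ne_iff' (mulVec_zero _)).2 hz) :=
  rfl

theorem mobius_pt_eq_pt_iff (A : GL (Fin 2) K) (a : K) :
    mobius A (pt a) = pt a ↔ vanishingForm a ((A : Matrix (Fin 2) (Fin 2) K) *ᵥ ![a, 1]) = 0 :=
  mk_eq_pt_iff _ a

theorem vanishingForm_mulVec_of_mobius_pt_eq {A : GL (Fin 2) K} {a : K}
    (h : mobius A (pt a) = pt a) (z : Fin 2 → K) :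
    vanishingForm a ((A : Matrix (Fin 2) (Fin 2) K) *ᵥ z) = multiplier A a * vanishingForm a z := by
  rw [mobius_pt_eq_pt_iff] at h
  simp only [vanishingForm, multiplier, mulVec, dotProduct, Fin.sum_univ_two, cons_val_zero,
    cons_val_one, mul_one] at h ⊢
  linear_combination z 1 * h

theorem multiplier_ne_zero {A : GL (Fin 2) K} {a : K} (h : mobius A (pt a) = pt a) :
    multiplier A a ≠ 0 := by
  intro h0
  have := vanishingForm_mulVec_of_mobius_pt_eq h ((A⁻¹ : GL (Fin 2) K) *ᵥ ![1, 0])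
  rw [mulVec_mulVec, ← GeneralLinearGroup.coe_mul, mul_inv_cancel, GeneralLinearGroup.coe_one,
    one_mulVec, h0, zero_mul] at this
  simp [vanishingForm] at this

end ProjectiveLine

section RationalMatrices

variable {F K : Type*} [Field F] [Field K] [Algebra F K]

theorem mobius_map_pt_apply_eq_pt (φ : K →ₐ[F] K) {M : GL (Fin 2) F} {a : K}
    (h : mobius (GeneralLinearGroup.map (algebraMap F K) M) (pt a) = pt a) :
    mobius (GeneralLinearGroup.map (algebraMap F K) M) (pt (φ a)) = pt (φ a) := by
  rw [mobius_pt_eq_pt_iff] at h ⊢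
  simpa [vanishingForm, mulVec, dotProduct, Fin.sum_univ_two, GeneralLinearGroup.map_apply]
    using congrArg φ h

theorem algHom_apply_multiplier (φ : K →ₐ[F] K) (M : GL (Fin 2) F) (a : K) :
    φ (multiplier (GeneralLinearGroup.map (algebraMap F K) M) a) =
      multiplier (GeneralLinearGroup.map (algebraMap F K) M) (φ a) := by
  simp only [multiplier, GeneralLinearGroup.map_apply, map_sub, map_mul, AlgHom.commutes]

end RationalMatrices

section FiniteFields

variable {F K : Type*} [Field F] [Fintype F] [Field K] [Fintype K] [Algebra F K]

theorem mem_range_algebraMap_iff_pow_card_eq (x : K) :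
    x ∈ Set.range (algebraMap F K) ↔ x ^ Fintype.card F = x := by
  rw [IsGalois.mem_range_algebraMap_iff_fixed]
  refine ⟨fun h => h (FiniteField.frobeniusAlgEquivOfAlgebraic F K), fun h f => ?_⟩
  obtain ⟨n, rfl⟩ := (FiniteField.bijective_frobeniusAlgEquivOfAlgebraic_pow F K).2 f
  rw [AlgEquiv.coe_pow, FiniteField.coe_frobeniusAlgEquivOfAlgebraic]
  exact Function.iterate_fixed h _

theorem pow_card_ne_self {x : K} (hx : x ∉ Set.range (algebraMap F K)) :
    x ^ Fintype.card F ≠ x :=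
  fun h => hx ((mem_range_algebraMap_iff_pow_card_eq x).2 h)

end FiniteFields
section QuadraticExtension

variable {F K : Type*} [Field F] [Fintype F] [Field K] [Fintype K] [Algebra F K]

local notation "q" => Fintype.card F

theorem exists_algebraMap_add_algebraMap_mul_eq (hK : Fintype.card K = q ^ 2) {ω : K}
    (hω : ω ∉ Set.range (algebraMap F K)) (z : K) :
    ∃ x y : F, algebraMap F K x + algebraMap F K y * ω = z := by
  let f : F × F → K := fun xy => algebraMap F K xy.1 + algebraMap F K xy.2 * ω
  have hf : f.Injective := by
    rintro ⟨x, y⟩ ⟨x', y'⟩ h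
    simp only [f] at h
    obtain rfl : y = y' := by
      by_contra hy
      refine hω ⟨(x' - x) / (y - y'), ?_⟩
      rw [map_div₀, div_eq_iff (by simpa [sub_eq_zero] using hy), map_sub, map_sub]
      linear_combination -h
    simpa using h
  obtain ⟨⟨x, y⟩, h⟩ := ((Fintype.bijective_iff_injective_and_card f).2
    ⟨hf, by simp [hK, sq]⟩).2 z
  exact ⟨x, y, h⟩

theorem exists_mobius_pt_eq_pt_and_multiplier_eq (hK : Fintype.card K = q ^ 2) {ω : K}
    (hω : ω ∉ Set.range (algebraMap F K)) {μ : K} (hμ : μ ≠ 0) :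
    ∃ M : GL (Fin 2) F,
      mobius (GeneralLinearGroup.map (algebraMap F K) M) (pt ω) = pt ω ∧
      multiplier (GeneralLinearGroup.map (algebraMap F K) M) ω = μ := by
  have hωqq : (ω ^ q) ^ q = ω := by rw [← pow_mul, ← sq, ← hK, FiniteField.pow_card]
  obtain ⟨T, hT⟩ : ω + ω ^ q ∈ Set.range (algebraMap F K) := by
    rw [mem_range_algebraMap_iff_pow_card_eq, ← FiniteField.frobeniusAlgHom_apply, map_add]
    simp only [FiniteField.frobeniusAlgHom_apply, hωqq, add_comm]
  obtain ⟨N, hN⟩ : ω * ω ^ q ∈ Set.range (algebraMap F K) := by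
    rw [mem_range_algebraMap_iff_pow_card_eq, mul_pow, hωqq, mul_comm]
  obtain ⟨x, y, hxy⟩ := exists_algebraMap_add_algebraMap_mul_eq hK hω μ
  -- the matrix of multiplication by `μ = x + yω` in the `F`-basis `(1, -ω)` of `K`,
  -- as `ω² = Tω - N`
  let M₀ : Matrix (Fin 2) (Fin 2) F := !![x, y * N; -y, x + y * T]
  have hdet : algebraMap F K M₀.det = μ ^ q * μ := by
    rw [← hxy, ← FiniteField.frobeniusAlgHom_apply F, map_add, map_mul, AlgHom.commutes,
      AlgHom.commutes, FiniteField.frobeniusAlgHom_apply, det_fin_two_of]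
    simp only [map_sub, map_mul, map_add, map_neg, hT, hN]
    ring
  refine ⟨GeneralLinearGroup.mkOfDetNeZero M₀ fun h0 => ?_, ?_, ?_⟩
  · rw [h0, map_zero] at hdet
    exact mul_ne_zero (pow_ne_zero _ hμ) hμ hdet.symm
  · rw [mobius_pt_eq_pt_iff]
    simp [M₀, vanishingForm, mulVec, dotProduct, Fin.sum_univ_two, GeneralLinearGroup.map_apply,
      GeneralLinearGroup.mkOfDetNeZero, hT, hN]
    ring
  · simpa [M₀, multiplier, GeneralLinearGroup.map_apply, GeneralLinearGroup.mkOfDetNeZero]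
      using hxy

theorem mobius_map_mk_eq_mk_iff {ω : K} (hω : ω ∉ Set.range (algebraMap F K)) {M : GL (Fin 2) F}
    (hM : mobius (GeneralLinearGroup.map (algebraMap F K) M) (pt ω) = pt ω)
    {z w : Fin 2 → K} (hz : z ≠ 0) (hw : w ≠ 0)
    (hz' : vanishingForm (ω ^ q) z ≠ 0) (hw' : vanishingForm (ω ^ q) w ≠ 0) :
    mobius (GeneralLinearGroup.map (algebraMap F K) M) (mk K z hz) = mk K w hw ↔
      multiplier (GeneralLinearGroup.map (algebraMap F K) M) ω ^ (q - 1) *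
        (vanishingForm ω w / vanishingForm (ω ^ q) w) =
          vanishingForm ω z / vanishingForm (ω ^ q) z := by
  have hM' := mobius_map_pt_apply_eq_pt (FiniteField.frobeniusAlgHom F K) hM
  have hμq := algHom_apply_multiplier (FiniteField.frobeniusAlgHom F K) M ω
  simp only [FiniteField.frobeniusAlgHom_apply] at hM' hμq
  rw [mobius_mk, mk_eq_mk_iff_vanishingForm (pow_card_ne_self hω).symm,
    vanishingForm_mulVec_of_mobius_pt_eq hM, vanishingForm_mulVec_of_mobius_pt_eq hM', ← hμq]
  have hμ := multiplier_ne_zero hM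
  generalize multiplier _ ω = μ at hμ ⊢
  rw [← pow_sub_one_mul Fintype.card_ne_zero μ, mul_div_assoc', div_eq_div_iff hw' hz']
  constructor <;> intro h
  · apply mul_left_cancel₀ hμ
    linear_combination -h
  · linear_combination (-μ) * h

theorem exists_mobius_mk_eq_mk_iff (hK : Fintype.card K = q ^ 2) {ω : K}
    (hω : ω ∉ Set.range (algebraMap F K)) {z w : Fin 2 → K} (hz : z ≠ 0) (hw : w ≠ 0)
    (hz' : vanishingForm (ω ^ q) z ≠ 0) (hw' : vanishingForm (ω ^ q) w ≠ 0) :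
    (∃ M : GL (Fin 2) F,
      mobius (GeneralLinearGroup.map (algebraMap F K) M) (pt ω) = pt ω ∧
      mobius (GeneralLinearGroup.map (algebraMap F K) M) (mk K z hz) = mk K w hw) ↔
    ∃ μ : Kˣ, (μ : K) ^ (q - 1) * (vanishingForm ω w / vanishingForm (ω ^ q) w) =
      vanishingForm ω z / vanishingForm (ω ^ q) z := by
  constructor
  · rintro ⟨M, hM, hMzw⟩
    exact ⟨Units.mk0 _ (multiplier_ne_zero hM),
      (mobius_map_mk_eq_mk_iff hω hM hz hw hz' hw').1 hMzw⟩
  · rintro ⟨μ, hμ⟩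
    obtain ⟨M, hM, hμM⟩ := exists_mobius_pt_eq_pt_and_multiplier_eq hK hω μ.ne_zero
    exact ⟨M, hM, (mobius_map_mk_eq_mk_iff hω hM hz hw hz' hw').2 (hμM ▸ hμ)⟩

theorem exists_mobius_mk_eq_mk_mul_add_iff (hK : Fintype.card K = q ^ 2) {ω : K}
    (hω : ω ∉ Set.range (algebraMap F K)) {v : Fin 2 → K} (hv : v ≠ 0)
    (hv' : vanishingForm (ω ^ q) v ≠ 0) {t : K} (ht : t ≠ 0) :
    (∃ h : (![ω * t + ω ^ q, t + 1] : Fin 2 → K) ≠ 0, ∃ M : GL (Fin 2) F,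
      mobius (GeneralLinearGroup.map (algebraMap F K) M) (pt ω) = pt ω ∧
      mobius (GeneralLinearGroup.map (algebraMap F K) M) (mk K v hv) = mk K _ h) ↔
    ∃ μ : Kˣ, (μ : K) ^ (q - 1) = t * -(vanishingForm ω v / vanishingForm (ω ^ q) v) := by
  have hωq : ω - ω ^ q ≠ 0 := sub_ne_zero.2 (pow_card_ne_self hω).symm
  have hw' : vanishingForm (ω ^ q) ![ω * t + ω ^ q, t + 1] ≠ 0 := by
    rw [vanishingForm_mul_add_right]
    exact mul_ne_zero hωq ht
  have hw : (![ω * t + ω ^ q, t + 1] : Fin 2 → K) ≠ 0 := fun h => hw' (by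
    rw [h]; simp [vanishingForm])
  rw [exists_prop_of_true hw, exists_mobius_mk_eq_mk_iff hK hω hv hw hv' hw']
  refine exists_congr fun μ => ?_
  rw [vanishingForm_mul_add_left, vanishingForm_mul_add_right,
    show (ω ^ q - ω) / ((ω - ω ^ q) * t) = -t⁻¹ by field_simp; ring]
  constructor <;> intro h
  · rw [← h]; field_simp
  · rw [h]; field_simp

end QuadraticExtension

section CyclicGroups

variable {G : Type*} [Group G] {γ : G}

theorem exists_pow_eq_zpow_iff_dvd (hγ : ∀ x : G, x ∈ Subgroup.zpowers γ) {d : ℕ}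
    (hd : d ∣ orderOf γ) (m : ℤ) : (∃ y : G, y ^ d = γ ^ m) ↔ (d : ℤ) ∣ m := by
  constructor
  · rintro ⟨y, hy⟩
    obtain ⟨l, rfl⟩ := Subgroup.mem_zpowers_iff.1 (hγ y)
    have hdvd : (orderOf γ : ℤ) ∣ l * d - m := orderOf_dvd_iff_zpow_eq_one.2 (by
      rw [_root_.zpow_sub, _root_.zpow_mul, zpow_natCast, hy, mul_inv_cancel])
    simpa using (dvd_mul_left (d : ℤ) l).sub ((Int.natCast_dvd_natCast.2 hd).trans hdvd)
  · rintro ⟨j, rfl⟩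
    exact ⟨γ ^ j, by rw [← zpow_natCast, ← _root_.zpow_mul, mul_comm]⟩

theorem existsUnique_lt_and_exists_pow_eq_pow_mul (hγ : ∀ x : G, x ∈ Subgroup.zpowers γ)
    {d : ℕ} (hd : d ∣ orderOf γ) (hd₀ : d ≠ 0) (x : G) :
    ∃! i : ℕ, i < d ∧ ∃ y : G, y ^ d = γ ^ i * x := by
  have : NeZero d := ⟨hd₀⟩
  obtain ⟨k, rfl⟩ := Subgroup.mem_zpowers_iff.1 (hγ x)
  simp_rw [← zpow_natCast γ, ← _root_.zpow_add, exists_pow_eq_zpow_iff_dvd hγ hd,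
    ← ZMod.intCast_zmod_eq_zero_iff_dvd, Int.cast_add, Int.cast_natCast, add_eq_zero_iff_eq_neg]
  refine ⟨(-(k : ZMod d)).val, ⟨ZMod.val_lt _, ZMod.natCast_zmod_val _⟩, ?_⟩
  rintro i ⟨hi, hik⟩
  rw [← hik, ZMod.val_cast_of_lt hi]

end CyclicGroups

theorem orbit_representatives_for_stabilizer
    {F : Type*} [Field F] [Fintype F] (q : ℕ) (hq : Fintype.card F = q)
    {K : Type*} [Field K] [Fintype K] [Algebra F K]
    (hK : Fintype.card K = q ^ 2)
    (ω : K) (hω : ω ∉ Set.range (algebraMap F K))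
    (γ : Kˣ) (hγ : ∀ x : Kˣ, x ∈ Subgroup.zpowers γ)
    (p : ℙ K (Fin 2 → K)) (hp₁ : p ≠ pt ω) (hp₂ : p ≠ pt (ω ^ q)) :
    ∃! i : ℕ, i < q - 1 ∧
      ∃ h : (![ω * (γ : K) ^ i + ω ^ q, (γ : K) ^ i + 1] : Fin 2 → K) ≠ 0,
      ∃ M : GL (Fin 2) F,
        mobius (Matrix.GeneralLinearGroup.map (algebraMap F K) M) (pt ω) = pt ω ∧
        mobius (Matrix.GeneralLinearGroup.map (algebraMap F K) M) p =
          Projectivization.mk K _ h := by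
  subst hq
  induction p using Projectivization.ind with | h v hv => ?_
  rw [Ne, mk_eq_pt_iff] at hp₁ hp₂
  let x : Kˣ := Units.mk0 (-(vanishingForm ω v / vanishingForm (ω ^ Fintype.card F) v))
    (neg_ne_zero.2 (div_ne_zero hp₁ hp₂))
  have key (i : ℕ) :
      (∃ h : (![ω * (γ : K) ^ i + ω ^ Fintype.card F, (γ : K) ^ i + 1] : Fin 2 → K) ≠ 0,
        ∃ M : GL (Fin 2) F,
          mobius (GeneralLinearGroup.map (algebraMap F K) M) (pt ω) = pt ω ∧
          mobius (GeneralLinearGroup.map (algebraMap F K) M) (mk K v hv) = mk K _ h) ↔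
        ∃ μ : Kˣ, μ ^ (Fintype.card F - 1) = γ ^ i * x := by
    rw [exists_mobius_mk_eq_mk_mul_add_iff hK hω hv hp₂ (pow_ne_zero i γ.ne_zero)]
    simp [Units.ext_iff, x]
  have hcard : orderOf γ = Fintype.card F ^ 2 - 1 := by
    rw [orderOf_eq_card_of_forall_mem_zpowers hγ, Nat.card_units, Nat.card_eq_fintype_card, hK]
  rw [existsUnique_congr fun i => and_congr_right fun _ => key i]
  exact existsUnique_lt_and_exists_pow_eq_pow_mul hγ
    (hcard ▸ by simpa using Nat.sub_one_dvd_pow_sub_one (Fintype.card F) 2)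
    (Nat.sub_ne_zero_of_lt Fintype.one_lt_card) x
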